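/- arXiv:2106.06628 — 2 statements merged into one kernel-verified Lean document; each statement's English description precedes it below -/
import Mathlib

section
/- Let b > 0 and let x : ℝ → ℝ be a bounded differentiable function satisfying x'(t) ≥ −b x(t) for all t ∈ ℝ, i.e. x'(t) = q(t) − b x(t) with q(t) ≥ 0. Then x(t) ≥ 0 for all t ∈ ℝ. Moreover if q(t) > 0 whenever x(t) = 0, then x(t) > 0 for all t ∈ ℝ. -/
/-!
Multiplying by the integrating factor `exp (b t)` turns `x' = q - b x` into
`(exp (b t) * x t)' = exp (b t) * q t ≥ 0`, so `exp (b t) * x t` is monotone. If `x u < 0`, then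
`x s ≤ x u * exp (b (u - s))` for `s ≤ u`, which tends to `-∞` as `s → -∞`; this contradicts
boundedness. Given `x ≥ 0`, a zero of `x` is a minimum, where `x' = q` must vanish.
-/

open Filter Real

lemma monotone_exp_mul_of_hasDerivAt {b : ℝ} {q x : ℝ → ℝ} (hq : ∀ t, 0 ≤ q t)
    (hx : ∀ t, HasDerivAt x (q t - b * x t) t) :
    Monotone fun t => exp (b * t) * x t := by
  refine monotone_of_hasDerivAt_nonneg (f' := fun t => exp (b * t) * q t) (fun t => ?_)
    fun t => mul_nonneg (exp_pos _).le (hq t)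
  have hexp : HasDerivAt (fun t => exp (b * t)) (exp (b * t) * b) t := by
    simpa using ((hasDerivAt_id t).const_mul b).exp
  exact (hexp.mul (hx t)).congr_deriv (by ring)

lemma tendsto_atBot_of_monotone_exp_mul {b u : ℝ} {x : ℝ → ℝ} (hb : 0 < b)
    (hmono : Monotone fun t => exp (b * t) * x t) (hu : x u < 0) :
    Tendsto x atBot atBot := by
  have hgap : Tendsto (fun s => u - s) atBot atTop :=
    (tendsto_atTop_add_const_left _ u tendsto_neg_atBot_atTop).congr
      fun s => (sub_eq_add_neg u s).symm
  have hdecay : Tendsto (fun s => x u * exp (b * (u - s))) atBot atBot :=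
    (tendsto_exp_atTop.comp (hgap.const_mul_atTop hb)).const_mul_atTop_of_neg hu
  refine tendsto_atBot_mono' _ ?_ hdecay
  filter_upwards [eventually_le_atBot u] with s hs
  rw [mul_sub, exp_sub, mul_div_assoc', le_div_iff₀ (exp_pos _), mul_comm (x s), mul_comm (x u)]
  exact hmono hs

lemma nonneg_of_monotone_exp_mul {b : ℝ} {x : ℝ → ℝ} (hb : 0 < b)
    (hmono : Monotone fun t => exp (b * t) * x t) (hbdd : BddBelow (Set.range x)) (t : ℝ) :
    0 ≤ x t := by
  by_contra! ht
  obtain ⟨C, hC⟩ := hbdd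
  obtain ⟨s, hs⟩ :=
    ((tendsto_atBot_of_monotone_exp_mul hb hmono ht).eventually (eventually_lt_atBot C)).exists
  exact (hC ⟨s, rfl⟩).not_gt hs

lemma pos_of_hasDerivAt_of_nonneg {b : ℝ} {q x : ℝ → ℝ}
    (hx : ∀ t, HasDerivAt x (q t - b * x t) t) (hnonneg : ∀ t, 0 ≤ x t)
    (hq : ∀ t, x t = 0 → 0 < q t) (t : ℝ) : 0 < x t := by
  refine (hnonneg t).lt_of_ne' fun hzero => (hq t hzero).ne' ?_
  have hmin : IsLocalMin x t := .of_forall fun s => hzero ▸ hnonneg s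
  simpa [hzero] using hmin.hasDerivAt_eq_zero (hx t)

theorem stmt_12 (b : ℝ) (hb : 0 < b) (q x : ℝ → ℝ)
    (hq : ∀ t, 0 ≤ q t)
    (hx : ∀ t, HasDerivAt x (q t - b * x t) t)
    (hbdd : ∃ Cb, ∀ t, |x t| ≤ Cb) :
    (∀ t, 0 ≤ x t) ∧ ((∀ t, x t = 0 → 0 < q t) → ∀ t, 0 < x t) := by
  obtain ⟨Cb, hCb⟩ := hbdd
  have hbddBelow : BddBelow (Set.range x) :=
    ⟨-Cb, Set.forall_mem_range.2 fun t => neg_le_of_abs_le (hCb t)⟩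
  have hnonneg : ∀ t, 0 ≤ x t :=
    nonneg_of_monotone_exp_mul hb (monotone_exp_mul_of_hasDerivAt hq hx) hbddBelow
  exact ⟨hnonneg, fun hqpos => pos_of_hasDerivAt_of_nonneg hx hnonneg hqpos⟩
end

section
/- Let v : ℝ → ℝ be continuously differentiable with v(y) ≥ v_min > 0 for all y, a > 0, r > a/v_min, and define δ : C([-r,0],ℝ) → (0,r) by the condition a = ∫_{-δ(φ)}^{0} v(φ(s)) ds. If φ is constant with value ξ, then the directional derivative of δ at φ in direction χ ∈ C([-r,0],ℝ) equals −(v'(ξ)/v(ξ)) ∫_{-a/v(ξ)}^{0} χ(s) ds. -/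
/-!
Write `ψₕ = ξ + hχ`, `dₕ = δ ψₕ` and `d₀ = δ ξ = a / v ξ`. Subtracting the threshold conditions for
`ψₕ` and for the constant `ξ` and linearising `v` at `ξ` gives the exact identity
`(dₕ - d₀) v(ξ) = -v'(ξ) h ∫_{-dₕ}^0 χ - Rₕ`, where the remainder `Rₕ` is `o(h)` because `χ` is
bounded on `[-r, 0]`. The identity first shows `dₕ - d₀ = O(h)`, hence `dₕ → d₀`, hence
`∫_{-dₕ}^0 χ → ∫_{-d₀}^0 χ`; dividing it by `h v(ξ)` then gives the limit.
-/

open Filter Topology MeasureTheory Set Asymptotics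

theorem HasDerivAt.isLittleO_comp_add_mul {v : ℝ → ℝ} {v' ξ : ℝ} (hv : HasDerivAt v v' ξ)
    {χ : ℝ → ℝ} {S : Set ℝ} {K : ℝ} (hK : ∀ s ∈ S, ‖χ s‖ ≤ K) :
    (fun p : ℝ × ℝ => v (ξ + p.1 * χ p.2) - v ξ - v' * (p.1 * χ p.2)) =o[𝓝 0 ×ˢ 𝓟 S]
      Prod.fst := by
  have hu : (fun p : ℝ × ℝ => p.1 * χ p.2) =O[𝓝 0 ×ˢ 𝓟 S] Prod.fst := by
    refine IsBigO.of_bound K (eventually_prod_principal_iff.2 (Eventually.of_forall ?_))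
    intro h s hs
    rw [norm_mul, mul_comm]
    exact mul_le_mul_of_nonneg_right (hK s hs) (norm_nonneg h)
  have hu₀ := hu.trans_tendsto (tendsto_fst (f := 𝓝 (0 : ℝ)))
  refine (((hasDerivAt_iff_isLittleO_nhds_zero.1 hv).comp_tendsto hu₀).trans_isBigO hu).congr_left
    fun p => ?_
  simp [smul_eq_mul, mul_comm]

theorem Asymptotics.IsLittleO.intervalIntegral_of_mem_Icc {l : Filter ℝ} {f : ℝ → ℝ → ℝ}
    {g : ℝ → ℝ} {α β : ℝ} {b c : ℝ → ℝ}
    (hf : (fun p : ℝ × ℝ => f p.1 p.2) =o[l ×ˢ 𝓟 (Icc α β)] fun p => g p.1)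
    (hb : ∀ h, b h ∈ Icc α β) (hc : ∀ h, c h ∈ Icc α β) :
    (fun h => ∫ s in b h..c h, f h s) =o[l] g := by
  refine IsLittleO.of_bound fun ε hε => ?_
  have hαβ : 0 < β - α + 1 := by linarith [(hb 0).1, (hb 0).2]
  filter_upwards [eventually_prod_principal_iff.1 (hf.def (div_pos hε hαβ))] with h hh
  have hlen : |c h - b h| ≤ β - α + 1 := by
    rw [abs_le]; constructor <;> linarith [(hb h).1, (hb h).2, (hc h).1, (hc h).2]
  calc ‖∫ s in b h..c h, f h s‖ ≤ ε / (β - α + 1) * ‖g h‖ * |c h - b h| :=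
        intervalIntegral.norm_integral_le_of_norm_le_const fun s hs =>
          hh s (uIcc_subset_Icc (hb h) (hc h) (uIoc_subset_uIcc hs))
    _ ≤ ε / (β - α + 1) * ‖g h‖ * (β - α + 1) := by gcongr
    _ = ε * ‖g h‖ := by field_simp

theorem intervalIntegral.integral_comp_const_add_linearize {v : ℝ → ℝ} (hv : Continuous v)
    (ξ v' : ℝ) {u : ℝ → ℝ} {b c : ℝ} (hu : ContinuousOn u (uIcc b c)) :
    ∫ s in b..c, v (ξ + u s) = (c - b) * v ξ + v' * (∫ s in b..c, u s) +
      ∫ s in b..c, (v (ξ + u s) - v ξ - v' * u s) := by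
  have hvu : IntervalIntegrable (fun s => v (ξ + u s)) volume b c :=
    (hv.comp_continuousOn (continuousOn_const.add hu)).intervalIntegrable
  have hu' : IntervalIntegrable u volume b c := hu.intervalIntegrable
  have hsplit := intervalIntegral.integral_sub (hvu.sub (intervalIntegrable_const (c := v ξ)))
    (hu'.const_mul v')
  rw [intervalIntegral.integral_sub hvu intervalIntegrable_const, intervalIntegral.integral_const,
    intervalIntegral.integral_const_mul, smul_eq_mul] at hsplit
  rw [hsplit]
  ring

theorem intervalIntegral.continuousOn_primitive_Icc_left {f : ℝ → ℝ} {α β : ℝ} (hαβ : α ≤ β)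
    (hf : ContinuousOn f (Icc α β)) : ContinuousOn (fun x => ∫ t in x..β, f t) (Icc α β) := by
  have h := intervalIntegral.continuousOn_primitive_interval_left (μ := volume) (a := α) (b := β)
    (by rw [uIcc_of_le hαβ]; exact hf.integrableOn_Icc)
  rwa [uIcc_of_le hαβ] at h

def IsDelayFunctional (v : ℝ → ℝ) (a r : ℝ) (δ : (ℝ → ℝ) → ℝ) : Prop :=
  ∀ ψ : ℝ → ℝ, ContinuousOn ψ (Icc (-r) 0) → δ ψ ∈ Ioo 0 r ∧ ∫ s in (-(δ ψ))..0, v (ψ s) = a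

namespace IsDelayFunctional

variable {v : ℝ → ℝ} {a r : ℝ} {δ : (ℝ → ℝ) → ℝ}

theorem neg_mem_Icc (hδ : IsDelayFunctional v a r δ) {ψ : ℝ → ℝ}
    (hψ : ContinuousOn ψ (Icc (-r) 0)) : -δ ψ ∈ Icc (-r) 0 := by
  obtain ⟨⟨hpos, hlt⟩, -⟩ := hδ ψ hψ
  constructor <;> linarith

theorem zero_mem_Icc (hδ : IsDelayFunctional v a r δ) : (0 : ℝ) ∈ Icc (-r) 0 :=
  right_mem_Icc.2 <|
    (hδ.neg_mem_Icc (continuousOn_const (c := 0))).1.trans (hδ.neg_mem_Icc continuousOn_const).2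

theorem neg_perturb_mem_Icc (hδ : IsDelayFunctional v a r δ) {χ : ℝ → ℝ}
    (hχ : ContinuousOn χ (Icc (-r) 0)) (ξ h : ℝ) : -δ (fun s => ξ + h * χ s) ∈ Icc (-r) 0 :=
  hδ.neg_mem_Icc (continuousOn_const.add (continuousOn_const.mul hχ))

theorem const_mul (hδ : IsDelayFunctional v a r δ) (ξ : ℝ) : δ (fun _ => ξ) * v ξ = a := by
  simpa [intervalIntegral.integral_const] using (hδ _ continuousOn_const).2

theorem sub_const_mul_eq (hδ : IsDelayFunctional v a r δ) (hv : Continuous v) {χ : ℝ → ℝ}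
    (hχ : ContinuousOn χ (Icc (-r) 0)) (ξ v' h : ℝ) :
    (δ (fun s => ξ + h * χ s) - δ (fun _ => ξ)) * v ξ =
      -(v' * (h * ∫ s in (-δ (fun s => ξ + h * χ s))..0, χ s)) -
        ∫ s in (-δ (fun s => ξ + h * χ s))..0, (v (ξ + h * χ s) - v ξ - v' * (h * χ s)) := by
  have hint := (hδ (fun s => ξ + h * χ s) (continuousOn_const.add (continuousOn_const.mul hχ))).2
  rw [intervalIntegral.integral_comp_const_add_linearize hv ξ v' (u := fun s => h * χ s)
      ((continuousOn_const.mul hχ).mono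
        (uIcc_subset_Icc (hδ.neg_perturb_mem_Icc hχ ξ h) hδ.zero_mem_Icc)),
    intervalIntegral.integral_const_mul] at hint
  linear_combination hint - hδ.const_mul ξ

theorem isLittleO_remainder (hδ : IsDelayFunctional v a r δ) {v' ξ : ℝ} (hv : HasDerivAt v v' ξ)
    {χ : ℝ → ℝ} (hχ : ContinuousOn χ (Icc (-r) 0)) :
    (fun h => ∫ s in (-δ (fun s => ξ + h * χ s))..0, (v (ξ + h * χ s) - v ξ - v' * (h * χ s)))
      =o[𝓝 0] id := by
  obtain ⟨K, hK⟩ := isCompact_Icc.exists_bound_of_continuousOn hχ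
  exact (hv.isLittleO_comp_add_mul hK).intervalIntegral_of_mem_Icc
    (hδ.neg_perturb_mem_Icc hχ ξ) fun _ => hδ.zero_mem_Icc

theorem tendsto_integral_perturb (hδ : IsDelayFunctional v a r δ) {ξ : ℝ} {χ : ℝ → ℝ}
    (hχ : ContinuousOn χ (Icc (-r) 0)) {l : Filter ℝ}
    (hd : Tendsto (fun h => δ (fun s => ξ + h * χ s)) l (𝓝 (δ fun _ => ξ))) :
    Tendsto (fun h => ∫ s in (-δ (fun s => ξ + h * χ s))..0, χ s) l
      (𝓝 (∫ s in (-δ fun _ => ξ)..0, χ s)) :=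
  (intervalIntegral.continuousOn_primitive_Icc_left hδ.zero_mem_Icc.1 hχ _
    (hδ.neg_mem_Icc continuousOn_const)).tendsto.comp <| tendsto_nhdsWithin_iff.2
      ⟨hd.neg, Eventually.of_forall (hδ.neg_perturb_mem_Icc hχ ξ)⟩

theorem tendsto_perturb (hδ : IsDelayFunctional v a r δ) (hv : Continuous v) {v' ξ : ℝ}
    (hv' : HasDerivAt v v' ξ) (hvξ : v ξ ≠ 0) {χ : ℝ → ℝ} (hχ : ContinuousOn χ (Icc (-r) 0)) :
    Tendsto (fun h => δ (fun s => ξ + h * χ s)) (𝓝 0) (𝓝 (δ fun _ => ξ)) := by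
  obtain ⟨C, hC⟩ := isCompact_Icc.exists_bound_of_continuousOn
    (intervalIntegral.continuousOn_primitive_Icc_left hδ.zero_mem_Icc.1 hχ)
  have hI : (fun h => h * ∫ s in (-δ (fun s => ξ + h * χ s))..0, χ s) =O[𝓝 0] id :=
    IsBigO.of_bound C <| Eventually.of_forall fun h => by
      rw [norm_mul, mul_comm]
      exact mul_le_mul_of_nonneg_right (hC _ (hδ.neg_perturb_mem_Icc hχ ξ h)) (norm_nonneg h)
  have hO : (fun h => δ (fun s => ξ + h * χ s) - δ fun _ => ξ) =O[𝓝 0] id :=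
    (((hI.const_mul_left v').neg_left.sub (hδ.isLittleO_remainder hv' hχ).isBigO).const_mul_left
      (v ξ)⁻¹).congr_left fun h => by
        rw [← hδ.sub_const_mul_eq hv hχ]; field_simp
  exact tendsto_sub_nhds_zero_iff.1 (hO.trans_tendsto tendsto_id)

theorem tendsto_slope (hδ : IsDelayFunctional v a r δ) (hv : Continuous v) {v' ξ : ℝ}
    (hv' : HasDerivAt v v' ξ) (hvξ : v ξ ≠ 0) {χ : ℝ → ℝ} (hχ : ContinuousOn χ (Icc (-r) 0)) :
    Tendsto (fun h : ℝ => (δ (fun s => ξ + h * χ s) - δ (fun _ => ξ)) / h) (𝓝[≠] 0)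
      (𝓝 (-(v' / v ξ) * ∫ s in (-δ fun _ => ξ)..0, χ s)) := by
  have hlim := (((hδ.tendsto_integral_perturb hχ (hδ.tendsto_perturb hv hv' hvξ hχ)).const_mul
    (-(v' / v ξ))).sub (((hδ.isLittleO_remainder hv' hχ).tendsto_div_nhds_zero).div_const
      (v ξ))).mono_left (nhdsWithin_le_nhds (s := {0}ᶜ))
  rw [zero_div, sub_zero] at hlim
  refine hlim.congr' ?_
  filter_upwards [self_mem_nhdsWithin] with h (hh : h ≠ 0)
  rw [id, eq_div_of_mul_eq hvξ (hδ.sub_const_mul_eq hv hχ ξ v' h)]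
  field_simp

end IsDelayFunctional

theorem stmt_14_general (a vmin r : ℝ) (hvmin : 0 < vmin)
    (v : ℝ → ℝ) (hv : ContDiff ℝ 1 v) (hvb : ∀ y, vmin ≤ v y)
    (δ : (ℝ → ℝ) → ℝ)
    (hδ : ∀ ψ : ℝ → ℝ, ContinuousOn ψ (Set.Icc (-r) 0) →
      δ ψ ∈ Set.Ioo 0 r ∧ (∫ s in (-(δ ψ))..0, v (ψ s)) = a)
    (ξ : ℝ) (χ : ℝ → ℝ) (hχ : ContinuousOn χ (Set.Icc (-r) 0)) :
    Tendsto (fun h : ℝ => (δ (fun s => ξ + h * χ s) - δ (fun _ => ξ)) / h) (𝓝[≠] 0)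
      (𝓝 (-(deriv v ξ / v ξ) * ∫ s in (-(a / v ξ))..0, χ s)) := by
  have hvξ : v ξ ≠ 0 := (hvmin.trans_le (hvb ξ)).ne'
  have hδ' : IsDelayFunctional v a r δ := hδ
  rw [← eq_div_of_mul_eq hvξ (hδ'.const_mul ξ)]
  exact hδ'.tendsto_slope hv.continuous (hv.differentiable one_ne_zero ξ).hasDerivAt hvξ hχ

theorem stmt_14 (a vmin r : ℝ) (ha : 0 < a) (hvmin : 0 < vmin) (hr : a / vmin < r)
    (v : ℝ → ℝ) (hv : ContDiff ℝ 1 v) (hvb : ∀ y, vmin ≤ v y)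
    (δ : (ℝ → ℝ) → ℝ)
    (hδ : ∀ ψ : ℝ → ℝ, ContinuousOn ψ (Set.Icc (-r) 0) →
      δ ψ ∈ Set.Ioo 0 r ∧ (∫ s in (-(δ ψ))..0, v (ψ s)) = a)
    (ξ : ℝ) (χ : ℝ → ℝ) (hχ : ContinuousOn χ (Set.Icc (-r) 0)) :
    Tendsto (fun h : ℝ => (δ (fun s => ξ + h * χ s) - δ (fun _ => ξ)) / h) (𝓝[≠] 0)
      (𝓝 (-(deriv v ξ / v ξ) * ∫ s in (-(a / v ξ))..0, χ s)) :=
  stmt_14_general a vmin r hvmin v hv hvb δ hδ ξ χ hχ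
end
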